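/- arXiv:1103.5850 — 4 statements merged into one kernel-verified Lean document; each statement's English description precedes it below -/
import Mathlib

section
/- Let (n, X, C^k_ij, F_i) be Cartan realization data and let (M, θ, h) be a realization of it. Then the structure identities hold at every point x of the image h(M): ⁅F_i, F_j⁆(x) = −Σ_k C^k_ij(x) F_k(x), and (F_j C^i_kl + F_k C^i_lj + F_l C^i_jk)(x) = −Σ_m (C^i_mj C^m_kl + C^i_mk C^m_lj + C^i_ml C^m_jk)(x), for all indices i, j, k, l. -/
/-!
Common definitions: coframes (via their dual frames), Lie brackets of vector fields
(characterized by their action on smooth functions), invariant functions, ranks,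
Cartan realization data and realizations.
-/

open Manifold Set Filter
open scoped Topology

noncomputable section

/-- The Euclidean model space `ℝ^n`. -/
abbrev EucSp (n : ℕ) : Type := EuclideanSpace ℝ (Fin n)

/-- A vector field on `M` is smooth if the corresponding section of the tangent bundle is. -/
def SmoothVF (n : ℕ) {M : Type*} [TopologicalSpace M] [ChartedSpace (EucSp n) M]
    [IsManifold (𝓡 n) (⊤ : ℕ∞) M] (X : ∀ p : M, TangentSpace (𝓡 n) p) : Prop :=
  ContMDiff (𝓡 n) (𝓡 n).tangent (⊤ : ℕ∞) (fun p => (⟨p, X p⟩ : TangentBundle (𝓡 n) M))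

/-- The derivative of a real valued function `f` along a vector field `X`. -/
def VFDeriv (n : ℕ) {M : Type*} [TopologicalSpace M] [ChartedSpace (EucSp n) M]
    [IsManifold (𝓡 n) (⊤ : ℕ∞) M] (X : ∀ p : M, TangentSpace (𝓡 n) p)
    (f : M → ℝ) : M → ℝ :=
  fun p => mfderiv (𝓡 n) 𝓘(ℝ) f p (X p)

/-- `W = ⁅Y, Z⁆` is the Lie bracket of the vector fields `Y` and `Z`, characterized by its
action on smooth real valued functions. -/
def IsLieBracketOf (n : ℕ) {M : Type*} [TopologicalSpace M] [ChartedSpace (EucSp n) M]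
    [IsManifold (𝓡 n) (⊤ : ℕ∞) M] (Y Z W : ∀ p : M, TangentSpace (𝓡 n) p) : Prop :=
  ∀ f : M → ℝ, ContMDiff (𝓡 n) 𝓘(ℝ) (⊤ : ℕ∞) f → ∀ p : M,
    VFDeriv n Y (VFDeriv n Z f) p - VFDeriv n Z (VFDeriv n Y f) p = VFDeriv n W f p

/-- A (dual) frame on the `n`-manifold `M`: `n` smooth vector fields `X 1, …, X n` which form a
basis of every tangent space.  This is exactly the data of a coframe `θ = (θ^1, …, θ^n)`,
recorded through its dual frame, determined by `θ^i (X j) = δ^i_j`. -/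
structure IsFrame (n : ℕ) {M : Type*} [TopologicalSpace M] [ChartedSpace (EucSp n) M]
    [IsManifold (𝓡 n) (⊤ : ℕ∞) M]
    (X : Fin n → ∀ p : M, TangentSpace (𝓡 n) p) : Prop where
  smooth : ∀ i, SmoothVF n (X i)
  indep : ∀ p : M, LinearIndependent ℝ (fun i => X i p)
  span : ∀ p : M, Submodule.span ℝ (Set.range fun i => X i p) = ⊤

/-- `C` are the structure functions of the coframe with dual frame `X`:
they are smooth, skew-symmetric in the lower indices, and
`⁅X i, X j⁆ = - ∑ k, C k i j • X k` (equivalently `dθ^k = ∑_{i<j} C^k_ij θ^i ∧ θ^j`). -/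
def HasStructureFns (n : ℕ) {M : Type*} [TopologicalSpace M] [ChartedSpace (EucSp n) M]
    [IsManifold (𝓡 n) (⊤ : ℕ∞) M] (X : Fin n → ∀ p : M, TangentSpace (𝓡 n) p)
    (C : Fin n → Fin n → Fin n → M → ℝ) : Prop :=
  (∀ k i j, ContMDiff (𝓡 n) 𝓘(ℝ) (⊤ : ℕ∞) (C k i j)) ∧
  (∀ k i j p, C k i j p = - C k j i p) ∧
  (∀ i j, IsLieBracketOf n (X i) (X j) (fun p => -(∑ k, C k i j p • X k p)))

/-- `φ : U → V` is a (coframe preserving) equivalence between the coframes with dual frames `X`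
on `M` and `X'` on `M'`: a diffeomorphism from the open set `U` onto the open set `V` with
`φ*θ'^i = θ^i` (equivalently `dφ ∘ X i = X' i ∘ φ`) on `U`. -/
def IsEquivOn (n : ℕ) {M M' : Type*}
    [TopologicalSpace M] [ChartedSpace (EucSp n) M] [IsManifold (𝓡 n) (⊤ : ℕ∞) M]
    [TopologicalSpace M'] [ChartedSpace (EucSp n) M'] [IsManifold (𝓡 n) (⊤ : ℕ∞) M']
    (X : Fin n → ∀ p : M, TangentSpace (𝓡 n) p)
    (X' : Fin n → ∀ p : M', TangentSpace (𝓡 n) p)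
    (U : Set M) (V : Set M') (φ : M → M') : Prop :=
  IsOpen U ∧ IsOpen V ∧ Set.BijOn φ U V ∧ ContMDiffOn (𝓡 n) (𝓡 n) (⊤ : ℕ∞) φ U ∧
    (∃ ψ : M' → M, ContMDiffOn (𝓡 n) (𝓡 n) (⊤ : ℕ∞) ψ V ∧ Set.InvOn ψ φ U V) ∧
    ∀ i, ∀ p ∈ U, mfderiv (𝓡 n) (𝓡 n) φ p (X i p) = X' i (φ p)

/-- `f` is an invariant function of the coframe with dual frame `X`: it is smooth and
`f ∘ φ = f` for every (locally defined) self-equivalence `φ : U → V` of the coframe. -/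
def IsInvariantFn (n : ℕ) {M : Type*} [TopologicalSpace M] [ChartedSpace (EucSp n) M]
    [IsManifold (𝓡 n) (⊤ : ℕ∞) M] (X : Fin n → ∀ p : M, TangentSpace (𝓡 n) p)
    (f : M → ℝ) : Prop :=
  ContMDiff (𝓡 n) 𝓘(ℝ) (⊤ : ℕ∞) f ∧
    ∀ (U V : Set M) (φ : M → M), IsEquivOn n X X U V φ → ∀ p ∈ U, f (φ p) = f p

/-- The rank of `Inv(θ)` at `p`: the dimension of the span of `{d_p f : f ∈ Inv(θ)}` in the
cotangent space at `p`. -/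
def invRankAt (n : ℕ) {M : Type*} [TopologicalSpace M] [ChartedSpace (EucSp n) M]
    [IsManifold (𝓡 n) (⊤ : ℕ∞) M] (X : Fin n → ∀ p : M, TangentSpace (𝓡 n) p)
    (p : M) : ℕ :=
  Module.finrank ℝ (Submodule.span ℝ {ω : TangentSpace (𝓡 n) p →L[ℝ] ℝ |
    ∃ f : M → ℝ, IsInvariantFn n X f ∧ mfderiv (𝓡 n) 𝓘(ℝ) f p = ω})

/-- The coframe with dual frame `X` is fully regular of rank `d`. -/
def FullyRegular (n d : ℕ) {M : Type*} [TopologicalSpace M] [ChartedSpace (EucSp n) M]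
    [IsManifold (𝓡 n) (⊤ : ℕ∞) M]
    (X : Fin n → ∀ p : M, TangentSpace (𝓡 n) p) : Prop :=
  ∀ p : M, invRankAt n X p = d

/-- `p` and `q` are locally formally equivalent: some diffeomorphism `φ : U → V` between open
neighborhoods of `p` and `q` maps `p` to `q` and satisfies `f ∘ φ = f` on `U` for every
invariant function `f` of the coframe. -/
def LocFormallyEquiv (n : ℕ) {M : Type*} [TopologicalSpace M] [ChartedSpace (EucSp n) M]
    [IsManifold (𝓡 n) (⊤ : ℕ∞) M] (X : Fin n → ∀ p : M, TangentSpace (𝓡 n) p)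
    (p q : M) : Prop :=
  ∃ (U V : Set M) (φ : M → M), IsOpen U ∧ IsOpen V ∧ p ∈ U ∧ q ∈ V ∧ Set.BijOn φ U V ∧
    ContMDiffOn (𝓡 n) (𝓡 n) (⊤ : ℕ∞) φ U ∧
    (∃ ψ : M → M, ContMDiffOn (𝓡 n) (𝓡 n) (⊤ : ℕ∞) ψ V ∧ Set.InvOn ψ φ U V) ∧
    φ p = q ∧ ∀ f : M → ℝ, IsInvariantFn n X f → ∀ p' ∈ U, f (φ p') = f p'

/-- Cartan realization data `(n, X', C, F)`: smooth functions `C k i j ∈ C^∞(X')`,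
skew-symmetric in `i, j`, and smooth vector fields `F i` on `X'`. -/
def IsCartanData (n d : ℕ) {X' : Type*} [TopologicalSpace X'] [ChartedSpace (EucSp d) X']
    [IsManifold (𝓡 d) (⊤ : ℕ∞) X'] (C : Fin n → Fin n → Fin n → X' → ℝ)
    (F : Fin n → ∀ x : X', TangentSpace (𝓡 d) x) : Prop :=
  (∀ k i j, ContMDiff (𝓡 d) 𝓘(ℝ) (⊤ : ℕ∞) (C k i j)) ∧
  (∀ k i j x, C k i j x = - C k j i x) ∧
  (∀ i, SmoothVF d (F i))

/-- The structure identities of Cartan realization data at the point `x`: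
`⁅F i, F j⁆ (x) = - ∑ k, C k i j x • F k x` (expressed through the action on smooth functions)
and the differential identity for the structure functions. -/
def StructureIdentitiesAt (n d : ℕ) {X' : Type*} [TopologicalSpace X']
    [ChartedSpace (EucSp d) X'] [IsManifold (𝓡 d) (⊤ : ℕ∞) X']
    (C : Fin n → Fin n → Fin n → X' → ℝ)
    (F : Fin n → ∀ x : X', TangentSpace (𝓡 d) x) (x : X') : Prop :=
  (∀ i j, ∀ g : X' → ℝ, ContMDiff (𝓡 d) 𝓘(ℝ) (⊤ : ℕ∞) g →
    VFDeriv d (F i) (VFDeriv d (F j) g) x - VFDeriv d (F j) (VFDeriv d (F i) g) x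
      = -∑ k, C k i j x * VFDeriv d (F k) g x) ∧
  (∀ i j k l,
    VFDeriv d (F j) (C i k l) x + VFDeriv d (F k) (C i l j) x + VFDeriv d (F l) (C i j k) x
      = -∑ m, (C i m j x * C m k l x + C i m k x * C m l j x + C i m l x * C m j k x))

/-- `(M, θ, h)` (with `Xf` the dual frame of the coframe `θ`) is a realization of the Cartan
realization data `(n, X', C, F)`: `h` is smooth, `⁅X i, X j⁆ = - ∑ k, (C k i j ∘ h) • X k`
(equivalently `dθ^k = ∑_{i<j} (C^k_ij ∘ h) θ^i ∧ θ^j`), and `dh ∘ X i = F i ∘ h`. -/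
def IsRealization (n d : ℕ) {M : Type*} [TopologicalSpace M] [ChartedSpace (EucSp n) M]
    [IsManifold (𝓡 n) (⊤ : ℕ∞) M] {X' : Type*} [TopologicalSpace X']
    [ChartedSpace (EucSp d) X'] [IsManifold (𝓡 d) (⊤ : ℕ∞) X']
    (Xf : Fin n → ∀ p : M, TangentSpace (𝓡 n) p)
    (C : Fin n → Fin n → Fin n → X' → ℝ)
    (F : Fin n → ∀ x : X', TangentSpace (𝓡 d) x)
    (h : M → X') : Prop :=
  ContMDiff (𝓡 n) (𝓡 d) (⊤ : ℕ∞) h ∧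
  (∀ i j, IsLieBracketOf n (Xf i) (Xf j) (fun p => -(∑ k, C k i j (h p) • Xf k p))) ∧
  (∀ i, ∀ p : M, mfderiv (𝓡 n) (𝓡 d) h p (Xf i p) = F i (h p))


/-!
The first identity is the bracket relation `⁅X i, X j⁆ = -∑ k, (C k i j ∘ h) • X k` transported
by `h`: since `dh ∘ X i = F i ∘ h`, differentiating `g` along `F i` at `h p` is differentiating
`g ∘ h` along `X i` at `p`.

The second identity is the Jacobi identity for the frame, written out with the structure
functions `c = C ∘ h`: expanding `⁅X a, ⁅X b, X e⁆⁆ f` gives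
`∑ r, (-X a (c r b e) + ∑ m, c m b e * c r a m) * X r f`, and the cyclic sum of these vanishes
for every `f`. Every covector at `p` is the differential of a smooth function (a chart functional
cut off by a bump function), so `f` can be chosen with `X r f p = δ r i`; this isolates the
`i`-th coefficient, which is the identity up to the skew-symmetry of `C`.
-/

section VectorFields

variable {n : ℕ} {M : Type*} [TopologicalSpace M] [ChartedSpace (EucSp n) M]
  [IsManifold (𝓡 n) (⊤ : ℕ∞) M]

lemma contMDiff_vFDeriv {V : ∀ p : M, TangentSpace (𝓡 n) p} (hV : SmoothVF n V) {f : M → ℝ}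
    (hf : ContMDiff (𝓡 n) 𝓘(ℝ) (⊤ : ℕ∞) f) :
    ContMDiff (𝓡 n) 𝓘(ℝ) (⊤ : ℕ∞) (VFDeriv n V f) := by
  have hsnd : ContMDiff 𝓘(ℝ, ℝ).tangent 𝓘(ℝ) (⊤ : ℕ∞)
      (fun z : TangentBundle 𝓘(ℝ, ℝ) ℝ => (z.2 : ℝ)) := by
    refine contMDiff_iff.2
      ⟨continuous_snd.comp (tangentBundleModelSpaceHomeomorph 𝓘(ℝ)).continuous,
        fun _ _ => contDiff_snd.contDiffOn.congr fun q _ => ?_⟩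
    simp only [mfld_simps, Function.comp]
    rw [tangentBundle_model_space_coe_chartAt_symm]
    rfl
  exact hsnd.comp ((hf.contMDiff_tangentMap (by simp)).comp hV)

lemma vFDeriv_sub {V : ∀ p : M, TangentSpace (𝓡 n) p} {u v : M → ℝ} {q : M}
    (hu : MDifferentiableAt (𝓡 n) 𝓘(ℝ) u q) (hv : MDifferentiableAt (𝓡 n) 𝓘(ℝ) v q) :
    VFDeriv n V (fun q' => u q' - v q') q = VFDeriv n V u q - VFDeriv n V v q := by
  change mfderiv (𝓡 n) 𝓘(ℝ) (u - v) q (V q) = _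
  rw [(hu.hasMFDerivAt.sub hv.hasMFDerivAt).mfderiv]
  rfl

lemma vFDeriv_neg_sum_mul {ι : Type} (s : Finset ι) {V : ∀ p : M, TangentSpace (𝓡 n) p}
    {a b : ι → M → ℝ} {q : M} (ha : ∀ m, MDifferentiableAt (𝓡 n) 𝓘(ℝ) (a m) q)
    (hb : ∀ m, MDifferentiableAt (𝓡 n) 𝓘(ℝ) (b m) q) :
    VFDeriv n V (fun q' => -∑ m ∈ s, a m q' * b m q') q
      = -∑ m ∈ s, (a m q * VFDeriv n V (b m) q + b m q * VFDeriv n V (a m) q) := by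
  let A : ι → TangentSpace (𝓡 n) q →L[ℝ] ℝ := fun m => mfderiv (𝓡 n) 𝓘(ℝ) (a m) q
  let B : ι → TangentSpace (𝓡 n) q →L[ℝ] ℝ := fun m => mfderiv (𝓡 n) 𝓘(ℝ) (b m) q
  have H : HasMFDerivAt (𝓡 n) 𝓘(ℝ) (-∑ m ∈ s, a m * b m) q
      (-∑ m ∈ s, (a m q • B m + b m q • A m)) :=
    (HasMFDerivAt.sum fun m _ => (ha m).hasMFDerivAt.mul (hb m).hasMFDerivAt).neg
  have hfun : (fun q' => -∑ m ∈ s, a m q' * b m q') = -∑ m ∈ s, a m * b m := by ext; simp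
  have heval : (-∑ m ∈ s, (a m q • B m + b m q • A m)) (V q)
      = -∑ m ∈ s, (a m q * B m (V q) + b m q * A m (V q)) := by simp
  change mfderiv (𝓡 n) 𝓘(ℝ) _ q (V q) = _
  rw [hfun, H.mfderiv]
  exact heval

lemma vFDeriv_neg_sum_smul (c : Fin n → M → ℝ) (X : Fin n → ∀ p : M, TangentSpace (𝓡 n) p)
    (f : M → ℝ) (q : M) :
    VFDeriv n (fun p => -(∑ k, c k p • X k p)) f q = -∑ k, c k q * VFDeriv n (X k) f q := by
  simp only [VFDeriv, map_neg, map_sum, map_smul]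
  rfl

lemma vFDeriv_comp {d : ℕ} {N : Type*} [TopologicalSpace N] [ChartedSpace (EucSp d) N]
    [IsManifold (𝓡 d) (⊤ : ℕ∞) N] {h : M → N} {g : N → ℝ} {q : M}
    {V : ∀ p : M, TangentSpace (𝓡 n) p} {W : ∀ x : N, TangentSpace (𝓡 d) x}
    (hg : MDifferentiableAt (𝓡 d) 𝓘(ℝ) g (h q)) (hh : MDifferentiableAt (𝓡 n) (𝓡 d) h q)
    (hVW : mfderiv (𝓡 n) (𝓡 d) h q (V q) = W (h q)) :
    VFDeriv d W g (h q) = VFDeriv n V (g ∘ h) q := by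
  simp only [VFDeriv]
  rw [mfderiv_comp q hg hh, ContinuousLinearMap.comp_apply, hVW]

lemma exists_contMDiff_mfderiv_eq [T2Space M] (p : M) (ω : TangentSpace (𝓡 n) p →L[ℝ] ℝ) :
    ∃ f : M → ℝ, ContMDiff (𝓡 n) 𝓘(ℝ) (⊤ : ℕ∞) f ∧ mfderiv (𝓡 n) 𝓘(ℝ) f p = ω := by
  obtain ⟨bump⟩ : Nonempty (SmoothBumpFunction (𝓡 n) p) := inferInstance
  let ω' : EucSp n →L[ℝ] ℝ := ω
  refine ⟨fun q => bump q • ω' (extChartAt (𝓡 n) p q),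
    bump.contMDiff_smul (ω'.contMDiff.comp_contMDiffOn contMDiffOn_extChartAt), ?_⟩
  have hloc : (fun q => bump q • ω' (extChartAt (𝓡 n) p q)) =ᶠ[𝓝 p]
      fun q => ω' (extChartAt (𝓡 n) p q) := by
    filter_upwards [bump.eventuallyEq_one] with q hq
    rw [show bump q = 1 from hq, one_smul]
  have hchart : mfderiv (𝓡 n) (𝓡 n) (chartAt (EucSp n) p) p = ContinuousLinearMap.id ℝ _ := by
    rw [mfderiv_chartAt_eq_tangentCoordChange (mem_chart_source _ p)]
    exact ContinuousLinearMap.ext fun v => tangentCoordChange_self (mem_extChartAt_source p)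
  have hlin : HasMFDerivAt (𝓡 n) 𝓘(ℝ) (fun q => ω' (extChartAt (𝓡 n) p q)) p
      (ω'.comp (mfderiv (𝓡 n) (𝓡 n) (chartAt (EucSp n) p) p)) :=
    ω'.hasMFDerivAt.comp p (hasMFDerivAt_extChartAt (mem_chart_source _ p))
  rw [hloc.mfderiv_eq, hlin.mfderiv, hchart]
  exact ω.comp_id

end VectorFields

section Frames

variable {n : ℕ} {M : Type*} [TopologicalSpace M] [ChartedSpace (EucSp n) M]
  [IsManifold (𝓡 n) (⊤ : ℕ∞) M] {X : Fin n → ∀ p : M, TangentSpace (𝓡 n) p}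

lemma eq_zero_of_forall_sum_mul_vFDeriv_eq_zero [T2Space M] {p : M}
    (hind : LinearIndependent ℝ fun i => X i p)
    (hspan : Submodule.span ℝ (range fun i => X i p) = ⊤) {A : Fin n → ℝ}
    (hA : ∀ f : M → ℝ, ContMDiff (𝓡 n) 𝓘(ℝ) (⊤ : ℕ∞) f → ∑ r, A r * VFDeriv n (X r) f p = 0)
    (i : Fin n) : A i = 0 := by
  have : FiniteDimensional ℝ (TangentSpace (𝓡 n) p) :=
    (inferInstance : FiniteDimensional ℝ (EucSp n))
  have : T2Space (TangentSpace (𝓡 n) p) := (inferInstance : T2Space (EucSp n))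
  let b : Module.Basis (Fin n) ℝ (TangentSpace (𝓡 n) p) := Module.Basis.mk hind hspan.ge
  obtain ⟨f, hf, hfd⟩ := exists_contMDiff_mfderiv_eq p (LinearMap.toContinuousLinearMap (b.coord i))
  have hdual : ∀ r, VFDeriv n (X r) f p = if r = i then 1 else 0 := by
    intro r
    change mfderiv (𝓡 n) 𝓘(ℝ) f p (X r p) = _
    rw [hfd]
    change b.coord i (X r p) = _
    rw [← Module.Basis.mk_apply hind hspan.ge r, Module.Basis.coord_apply, Module.Basis.repr_self,
      Finsupp.single_apply]
  simpa [hdual] using hA f hf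

lemma IsLieBracketOf.vFDeriv_sub_vFDeriv {c : Fin n → M → ℝ} {Y Z : ∀ p : M, TangentSpace (𝓡 n) p}
    (hbr : IsLieBracketOf n Y Z fun p => -(∑ k, c k p • X k p)) {f : M → ℝ}
    (hf : ContMDiff (𝓡 n) 𝓘(ℝ) (⊤ : ℕ∞) f) (q : M) :
    VFDeriv n Y (VFDeriv n Z f) q - VFDeriv n Z (VFDeriv n Y f) q
      = -∑ k, c k q * VFDeriv n (X k) f q := by
  rw [hbr f hf q, vFDeriv_neg_sum_smul]

variable {c : Fin n → Fin n → Fin n → M → ℝ}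

lemma vFDeriv_double_bracket (hX : ∀ a, SmoothVF n (X a))
    (hc : ∀ k i j, ContMDiff (𝓡 n) 𝓘(ℝ) (⊤ : ℕ∞) (c k i j))
    (hbr : ∀ i j, IsLieBracketOf n (X i) (X j) fun p => -(∑ k, c k i j p • X k p))
    {f : M → ℝ} (hf : ContMDiff (𝓡 n) 𝓘(ℝ) (⊤ : ℕ∞) f) (a b e : Fin n) (p : M) :
    VFDeriv n (X a) (VFDeriv n (X b) (VFDeriv n (X e) f)) p
        - VFDeriv n (X a) (VFDeriv n (X e) (VFDeriv n (X b) f)) p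
        - (VFDeriv n (X b) (VFDeriv n (X e) (VFDeriv n (X a) f)) p
          - VFDeriv n (X e) (VFDeriv n (X b) (VFDeriv n (X a) f)) p)
      = ∑ r, (-VFDeriv n (X a) (c r b e) p + ∑ m, c m b e p * c r a m p)
          * VFDeriv n (X r) f p := by
  have hD : ∀ a g, ContMDiff (𝓡 n) 𝓘(ℝ) (⊤ : ℕ∞) g →
      ContMDiff (𝓡 n) 𝓘(ℝ) (⊤ : ℕ∞) (VFDeriv n (X a) g) :=
    fun a _ hg => contMDiff_vFDeriv (hX a) hg
  have hmd : ∀ g : M → ℝ, ContMDiff (𝓡 n) 𝓘(ℝ) (⊤ : ℕ∞) g → MDifferentiableAt (𝓡 n) 𝓘(ℝ) g p :=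
    fun g hg => hg.mdifferentiableAt (by simp)
  have hbe : (fun q => VFDeriv n (X b) (VFDeriv n (X e) f) q
      - VFDeriv n (X e) (VFDeriv n (X b) f) q) = fun q => -∑ m, c m b e q * VFDeriv n (X m) f q :=
    funext fun q => (hbr b e).vFDeriv_sub_vFDeriv hf q
  have hswap : ∀ m, VFDeriv n (X a) (VFDeriv n (X m) f) p
      = VFDeriv n (X m) (VFDeriv n (X a) f) p - ∑ r, c r a m p * VFDeriv n (X r) f p :=
    fun m => by linarith [(hbr a m).vFDeriv_sub_vFDeriv hf p]
  have hdouble : ∑ m, c m b e p * ∑ r, c r a m p * VFDeriv n (X r) f p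
      = ∑ r, (∑ m, c m b e p * c r a m p) * VFDeriv n (X r) f p := by
    simp only [Finset.mul_sum, Finset.sum_mul, mul_assoc]
    exact Finset.sum_comm
  rw [← vFDeriv_sub (hmd _ (hD b _ (hD e f hf))) (hmd _ (hD e _ (hD b f hf))), hbe,
    vFDeriv_neg_sum_mul _ (fun m => hmd _ (hc m b e)) (fun m => hmd _ (hD m f hf)),
    (hbr b e).vFDeriv_sub_vFDeriv (hD a f hf) p]
  simp only [hswap, mul_sub, add_mul, neg_mul, Finset.sum_add_distrib, Finset.sum_sub_distrib,
    Finset.sum_neg_distrib]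
  rw [hdouble]
  simp only [mul_comm (VFDeriv n (X _) f p)]
  ring

lemma IsFrame.cyclic_sum_structureFns [T2Space M] (hfr : IsFrame n X)
    (hc : ∀ k i j, ContMDiff (𝓡 n) 𝓘(ℝ) (⊤ : ℕ∞) (c k i j))
    (hbr : ∀ i j, IsLieBracketOf n (X i) (X j) fun p => -(∑ k, c k i j p • X k p))
    (i j k l : Fin n) (p : M) :
    (-VFDeriv n (X j) (c i k l) p + ∑ m, c m k l p * c i j m p)
      + (-VFDeriv n (X k) (c i l j) p + ∑ m, c m l j p * c i k m p)
      + (-VFDeriv n (X l) (c i j k) p + ∑ m, c m j k p * c i l m p) = 0 := by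
  refine eq_zero_of_forall_sum_mul_vFDeriv_eq_zero (hfr.indep p) (hfr.span p)
    (A := fun r => (-VFDeriv n (X j) (c r k l) p + ∑ m, c m k l p * c r j m p)
      + (-VFDeriv n (X k) (c r l j) p + ∑ m, c m l j p * c r k m p)
      + (-VFDeriv n (X l) (c r j k) p + ∑ m, c m j k p * c r l m p)) (fun f hf => ?_) i
  have hjkl := vFDeriv_double_bracket hfr.smooth hc hbr hf j k l p
  have hklj := vFDeriv_double_bracket hfr.smooth hc hbr hf k l j p
  have hljk := vFDeriv_double_bracket hfr.smooth hc hbr hf l j k p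
  simp only [add_mul, Finset.sum_add_distrib] at hjkl hklj hljk ⊢
  linear_combination -(hjkl + hklj + hljk)

end Frames

namespace IsRealization

variable {n d : ℕ} {M : Type*} [TopologicalSpace M] [ChartedSpace (EucSp n) M]
  [IsManifold (𝓡 n) (⊤ : ℕ∞) M] {X' : Type*} [TopologicalSpace X'] [ChartedSpace (EucSp d) X']
  [IsManifold (𝓡 d) (⊤ : ℕ∞) X'] {Xf : Fin n → ∀ p : M, TangentSpace (𝓡 n) p}
  {C : Fin n → Fin n → Fin n → X' → ℝ} {F : Fin n → ∀ x : X', TangentSpace (𝓡 d) x} {h : M → X'}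

lemma vFDeriv_apply (hreal : IsRealization n d Xf C F h) {g : X' → ℝ}
    (hg : ContMDiff (𝓡 d) 𝓘(ℝ) (⊤ : ℕ∞) g) (a : Fin n) (q : M) :
    VFDeriv d (F a) g (h q) = VFDeriv n (Xf a) (g ∘ h) q :=
  vFDeriv_comp (hg.mdifferentiableAt (by simp)) (hreal.1.mdifferentiableAt (by simp))
    (hreal.2.2 a q)

lemma vFDeriv_bracket (hreal : IsRealization n d Xf C F h) (hF : ∀ i, SmoothVF d (F i))
    (i j : Fin n) {g : X' → ℝ} (hg : ContMDiff (𝓡 d) 𝓘(ℝ) (⊤ : ℕ∞) g) (p : M) :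
    VFDeriv d (F i) (VFDeriv d (F j) g) (h p) - VFDeriv d (F j) (VFDeriv d (F i) g) (h p)
      = -∑ k, C k i j (h p) * VFDeriv d (F k) g (h p) := by
  have hpull : ∀ a, VFDeriv d (F a) g ∘ h = VFDeriv n (Xf a) (g ∘ h) :=
    fun a => funext (hreal.vFDeriv_apply hg a)
  rw [hreal.vFDeriv_apply (contMDiff_vFDeriv (hF j) hg), hreal.vFDeriv_apply
    (contMDiff_vFDeriv (hF i) hg), hpull, hpull,
    (hreal.2.1 i j).vFDeriv_sub_vFDeriv (hg.comp hreal.1)]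
  simp only [hreal.vFDeriv_apply hg]

lemma cyclic_vFDeriv_structureFns [T2Space M] (hreal : IsRealization n d Xf C F h)
    (hfr : IsFrame n Xf) (hC : ∀ k i j, ContMDiff (𝓡 d) 𝓘(ℝ) (⊤ : ℕ∞) (C k i j))
    (hskew : ∀ k i j x, C k i j x = -C k j i x) (i j k l : Fin n) (p : M) :
    VFDeriv d (F j) (C i k l) (h p) + VFDeriv d (F k) (C i l j) (h p)
        + VFDeriv d (F l) (C i j k) (h p)
      = -∑ m, (C i m j (h p) * C m k l (h p) + C i m k (h p) * C m l j (h p)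
          + C i m l (h p) * C m j k (h p)) := by
  have hcyc := hfr.cyclic_sum_structureFns (c := fun a b e q => C a b e (h q))
    (fun a b e => (hC a b e).comp hreal.1) hreal.2.1 i j k l p
  have hswap : ∀ m, C i m j (h p) * C m k l (h p) + C i m k (h p) * C m l j (h p)
        + C i m l (h p) * C m j k (h p)
      = -(C m k l (h p) * C i j m (h p) + C m l j (h p) * C i k m (h p)
        + C m j k (h p) * C i l m (h p)) := fun m => by
    rw [hskew i m j, hskew i m k, hskew i m l]
    ring
  rw [hreal.vFDeriv_apply (hC i k l), hreal.vFDeriv_apply (hC i l j),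
    hreal.vFDeriv_apply (hC i j k), Finset.sum_congr rfl fun m _ => hswap m]
  simp only [Function.comp_def, Finset.sum_neg_distrib, Finset.sum_add_distrib] at hcyc ⊢
  linarith

end IsRealization

theorem realization_implies_structure_identities_general
    (n d : ℕ) {M : Type*} [TopologicalSpace M] [ChartedSpace (EucSp n) M]
    [IsManifold (𝓡 n) (⊤ : ℕ∞) M] [T2Space M]
    {X' : Type*} [TopologicalSpace X'] [ChartedSpace (EucSp d) X']
    [IsManifold (𝓡 d) (⊤ : ℕ∞) X']
    (C : Fin n → Fin n → Fin n → X' → ℝ) (F : Fin n → ∀ x : X', TangentSpace (𝓡 d) x)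
    (hdata : IsCartanData n d C F)
    (Xf : Fin n → ∀ p : M, TangentSpace (𝓡 n) p) (h : M → X')
    (hfr : IsFrame n Xf) (hreal : IsRealization n d Xf C F h) :
    ∀ x ∈ Set.range h, StructureIdentitiesAt n d C F x := by
  obtain ⟨hC, hskew, hF⟩ := hdata
  rintro _ ⟨p, rfl⟩
  exact ⟨fun i j _ hg => hreal.vFDeriv_bracket hF i j hg p,
    fun i j k l => hreal.cyclic_vFDeriv_structureFns hfr hC hskew i j k l p⟩

/-- if `(M, θ, h)` is a realization of Cartan realization data `(n, X', C, F)`,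
then the structure identities hold at every point of the image `h(M)`. -/
theorem realization_implies_structure_identities
    (n d : ℕ) {M : Type*} [TopologicalSpace M] [ChartedSpace (EucSp n) M]
    [IsManifold (𝓡 n) (⊤ : ℕ∞) M] [T2Space M]
    {X' : Type*} [TopologicalSpace X'] [ChartedSpace (EucSp d) X']
    [IsManifold (𝓡 d) (⊤ : ℕ∞) X'] [T2Space X']
    (C : Fin n → Fin n → Fin n → X' → ℝ) (F : Fin n → ∀ x : X', TangentSpace (𝓡 d) x)
    (hdata : IsCartanData n d C F)
    (Xf : Fin n → ∀ p : M, TangentSpace (𝓡 n) p) (h : M → X')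
    (hfr : IsFrame n Xf) (hreal : IsRealization n d Xf C F h) :
    ∀ x ∈ Set.range h, StructureIdentitiesAt n d C F x :=
  realization_implies_structure_identities_general n d C F hdata Xf h hfr hreal
end
end

section
/- Let M be a connected smooth n-manifold and θ a coframe on M with dual frame (X_1,…,X_n). The set g of infinitesimal symmetries of θ (smooth vector fields Y on M with ⁅Y, X_i⁆ = 0 for all i) is a real vector subspace of the space of smooth vector fields on M, and for every p ∈ M the evaluation map g → T_pM, Y ↦ Y(p), is injective; in particular g is finite-dimensional of dimension at most n. -/
/-!
Common definitions: coframes (via their dual frames), Lie brackets of vector fields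
(characterized by their action on smooth functions), invariant functions, ranks,
Cartan realization data and realizations.
-/

open Manifold Set Filter
open scoped Topology

noncomputable section

/-!
An infinitesimal symmetry `Y` commutes with the frame, so in a chart its coordinate vector `y`
satisfies `Dy·ξᵢ = Dξᵢ·y`, where `ξᵢ` are the coordinate vectors of the frame. Since the `ξᵢ`
span, this bounds `‖Dy‖` by a multiple of `‖y‖` near any point, and Grönwall's inequality along
segments shows that the zero set of `Y` is open. It is closed by continuity, so on a connected
manifold a symmetry vanishing at one point vanishes identically. Hence evaluation at any point `p`
embeds the symmetries linearly into `T_pM ≅ ℝⁿ`.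
-/

section Euclidean

open Metric

variable {E F : Type*} [NormedAddCommGroup E] [NormedSpace ℝ E]
  [NormedAddCommGroup F] [NormedSpace ℝ F]

theorem eqOn_zero_of_norm_fderiv_le {y : E → F} {x₀ : E} {r K : ℝ}
    (hy : DifferentiableOn ℝ y (ball x₀ r))
    (hK : ∀ x ∈ ball x₀ r, ‖fderiv ℝ y x‖ ≤ K * ‖y x‖) (hy₀ : y x₀ = 0) :
    EqOn y 0 (ball x₀ r) := by
  intro x hx
  have hseg : ∀ t ∈ Icc (0 : ℝ) 1, x₀ + t • (x - x₀) ∈ ball x₀ r := fun t ht =>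
    (convex_ball x₀ r).add_smul_sub_mem (mem_ball_self (pos_of_mem_ball hx)) hx ht
  have hderiv : ∀ t ∈ Icc (0 : ℝ) 1, HasDerivAt (fun t : ℝ => y (x₀ + t • (x - x₀)))
      (fderiv ℝ y (x₀ + t • (x - x₀)) (x - x₀)) t := fun t ht =>
    ((hy.differentiableAt (isOpen_ball.mem_nhds (hseg t ht))).hasFDerivAt.comp_hasDerivAt t
      (((hasDerivAt_id t).smul_const (x - x₀)).const_add x₀)).congr_deriv (by simp)
  have hbound : ∀ t ∈ Ico (0 : ℝ) 1, ‖fderiv ℝ y (x₀ + t • (x - x₀)) (x - x₀)‖ ≤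
      (K * ‖x - x₀‖) * ‖y (x₀ + t • (x - x₀))‖ + 0 := fun t ht => by
    have hmem := hseg t (Ico_subset_Icc_self ht)
    calc _ ≤ ‖fderiv ℝ y (x₀ + t • (x - x₀))‖ * ‖x - x₀‖ := ContinuousLinearMap.le_opNorm _ _
      _ ≤ K * ‖y (x₀ + t • (x - x₀))‖ * ‖x - x₀‖ := by gcongr; exact hK _ hmem
      _ = _ := by ring
  have := norm_le_gronwallBound_of_norm_deriv_right_le
    (fun t ht => (hderiv t ht).continuousAt.continuousWithinAt)
    (fun t ht => (hderiv t (Ico_subset_Icc_self ht)).hasDerivWithinAt)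
    (by simp [hy₀] : ‖y (x₀ + (0 : ℝ) • (x - x₀))‖ ≤ 0) hbound 1 (by simp)
  simpa [gronwallBound_ε0_δ0] using this

theorem exists_eventually_bounded_sum_smul_eq {X ι : Type*} [TopologicalSpace X] [Fintype ι]
    [FiniteDimensional ℝ F] {ξ : ι → X → F} {x₀ : X} (hξ : ∀ i, ContinuousAt (ξ i) x₀)
    (hspan : Submodule.span ℝ (range fun i => ξ i x₀) = ⊤) :
    ∃ C, 0 ≤ C ∧ ∀ᶠ x in 𝓝 x₀, ∀ w : F, ∃ c : ι → ℝ, ∑ i, c i • ξ i x = w ∧ ‖c‖ ≤ C * ‖w‖ := by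
  classical
  let T : X → (ι → ℝ) →L[ℝ] F := fun x =>
    ∑ i, (ContinuousLinearMap.proj i : (ι → ℝ) →L[ℝ] ℝ).smulRight (ξ i x)
  have hT : ∀ x c, T x c = ∑ i, c i • ξ i x := fun x c => by simp [T]
  have hT_cont : ContinuousAt T x₀ := by
    refine tendsto_finsetSum _ fun i _ => ?_
    exact (ContinuousLinearMap.smulRightL ℝ (ι → ℝ) F (.proj i)).continuous.continuousAt.comp (hξ i)
  have hT_surj : LinearMap.range (T x₀ : (ι → ℝ) →ₗ[ℝ] F) = ⊤ := by
    rw [← top_le_iff, ← hspan, Submodule.span_le]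
    rintro - ⟨i, rfl⟩
    exact ⟨Pi.single i 1, by simp [hT]⟩
  obtain ⟨R, hR⟩ := (T x₀ : (ι → ℝ) →ₗ[ℝ] F).exists_rightInverse_of_surjective hT_surj
  let R' : F →L[ℝ] (ι → ℝ) := LinearMap.toContinuousLinearMap R
  -- `T x ∘ R` is the identity at `x₀`, so it stays invertible near `x₀` with bounded inverse,
  -- and `c := R ((T x ∘ R)⁻¹ w)` works.
  let Φ : X → F →L[ℝ] F := fun x => (T x).comp R'
  have hΦ₀ : Φ x₀ = 1 := ContinuousLinearMap.ext fun w => LinearMap.congr_fun hR w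
  have hΦ_cont : ContinuousAt Φ x₀ := hT_cont.clm_comp continuousAt_const
  have hunit : ∀ᶠ x in 𝓝 x₀, IsUnit (Φ x) :=
    hΦ_cont.eventually_mem (Units.isOpen.mem_nhds (by rw [hΦ₀]; exact isUnit_one))
  have hinv : ∀ᶠ x in 𝓝 x₀, ‖Ring.inverse (Φ x)‖ < ‖(1 : F →L[ℝ] F)‖ + 1 := by
    have : ContinuousAt (fun x => Ring.inverse (Φ x)) x₀ := by
      have h := NormedRing.inverse_continuousAt (1 : (F →L[ℝ] F)ˣ)
      rw [Units.val_one, ← hΦ₀] at h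
      exact h.comp hΦ_cont
    refine this.norm.eventually (gt_mem_nhds ?_)
    simp [hΦ₀]
  refine ⟨‖R'‖ * (‖(1 : F →L[ℝ] F)‖ + 1), by positivity, ?_⟩
  filter_upwards [hunit, hinv] with x hxu hxi w
  refine ⟨R' (Ring.inverse (Φ x) w), ?_, ?_⟩
  · rw [← hT]
    exact congrArg (fun L : F →L[ℝ] F => L w) (Ring.mul_inverse_cancel _ hxu)
  · calc ‖R' (Ring.inverse (Φ x) w)‖ ≤ ‖R'‖ * (‖Ring.inverse (Φ x)‖ * ‖w‖) :=
          (R'.le_opNorm _).trans (by gcongr; exact (Ring.inverse (Φ x)).le_opNorm w)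
      _ ≤ ‖R'‖ * (‖(1 : F →L[ℝ] F)‖ + 1) * ‖w‖ := by
          rw [mul_assoc]; gcongr

theorem eventuallyEq_zero_of_fderiv_comm {ι : Type*} [Fintype ι] [FiniteDimensional ℝ E]
    {ξ : ι → E → E} {y : E → E} {x₀ : E} (hξ : ∀ i, ContDiffAt ℝ 1 (ξ i) x₀)
    (hy : ∀ᶠ x in 𝓝 x₀, DifferentiableAt ℝ y x)
    (hcomm : ∀ᶠ x in 𝓝 x₀, ∀ i, fderiv ℝ y x (ξ i x) = fderiv ℝ (ξ i) x (y x))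
    (hspan : Submodule.span ℝ (range fun i => ξ i x₀) = ⊤) (hy₀ : y x₀ = 0) :
    y =ᶠ[𝓝 x₀] 0 := by
  obtain ⟨C, hC, hdecomp⟩ :=
    exists_eventually_bounded_sum_smul_eq (fun i => (hξ i).continuousAt) hspan
  set B := ∑ i, ‖fderiv ℝ (ξ i) x₀‖ + 1
  have hB : ∀ᶠ x in 𝓝 x₀, ∑ i, ‖fderiv ℝ (ξ i) x‖ < B :=
    (tendsto_finsetSum _ fun i _ => ((hξ i).continuousAt_fderiv one_ne_zero).norm).eventually
      (gt_mem_nhds (lt_add_one _))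
  have hbound : ∀ᶠ x in 𝓝 x₀, ‖fderiv ℝ y x‖ ≤ (C * B) * ‖y x‖ := by
    filter_upwards [hdecomp, hB, hcomm] with x hdecomp hB hcomm
    refine ContinuousLinearMap.opNorm_le_bound _ (by positivity) fun w => ?_
    obtain ⟨c, rfl, hc⟩ := hdecomp w
    simp only [map_sum, map_smul, hcomm]
    calc ‖∑ i, c i • fderiv ℝ (ξ i) x (y x)‖
        ≤ ∑ i, ‖c‖ * (‖fderiv ℝ (ξ i) x‖ * ‖y x‖) := by
          refine (norm_sum_le _ _).trans (Finset.sum_le_sum fun i _ => ?_)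
          rw [norm_smul]
          gcongr
          · exact norm_le_pi_norm c i
          · exact (fderiv ℝ (ξ i) x).le_opNorm _
      _ = ‖c‖ * (∑ i, ‖fderiv ℝ (ξ i) x‖) * ‖y x‖ := by
          rw [← Finset.mul_sum, ← Finset.sum_mul, mul_assoc]
      _ ≤ (C * ‖∑ i, c i • ξ i x‖) * B * ‖y x‖ := by gcongr
      _ = C * B * ‖y x‖ * ‖∑ i, c i • ξ i x‖ := by ring
  obtain ⟨r, hr, hball⟩ := eventually_nhds_iff_ball.mp (hy.and hbound)
  exact eventually_of_mem (ball_mem_nhds x₀ hr)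
    (eqOn_zero_of_norm_fderiv_le (fun x hx => (hball x hx).1.differentiableWithinAt)
      (fun x hx => (hball x hx).2) hy₀)

end Euclidean

theorem contMDiff_tangentBundle_snd :
    ContMDiff 𝓘(ℝ).tangent 𝓘(ℝ) (⊤ : ℕ∞) (fun z : TangentBundle 𝓘(ℝ) ℝ => z.2) := by
  refine contMDiff_iff.2 ⟨continuous_snd.comp (tangentBundleModelSpaceHomeomorph 𝓘(ℝ)).continuous,
    fun _ _ => ?_⟩
  simp only [mfld_simps]
  exact contDiff_snd.contDiffOn

section VectorFields

variable {n : ℕ} {M : Type*} [TopologicalSpace M] [ChartedSpace (EucSp n) M]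
  [IsManifold (𝓡 n) (⊤ : ℕ∞) M]

theorem SmoothVF.add {Y Y' : Π p : M, TangentSpace (𝓡 n) p} (hY : SmoothVF n Y)
    (hY' : SmoothVF n Y') : SmoothVF n (Y + Y') :=
  ContMDiff.add_section hY hY'

theorem SmoothVF.const_smul {Y : Π p : M, TangentSpace (𝓡 n) p} (c : ℝ) (hY : SmoothVF n Y) :
    SmoothVF n (c • Y) :=
  ContMDiff.const_smul_section hY

theorem smoothVF_zero : SmoothVF n (0 : Π p : M, TangentSpace (𝓡 n) p) :=
  Bundle.contMDiff_zeroSection ℝ (TangentSpace (𝓡 n) : M → Type _)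

theorem SmoothVF.contMDiff_vfDeriv {Y : Π p : M, TangentSpace (𝓡 n) p} (hY : SmoothVF n Y)
    {f : M → ℝ} (hf : ContMDiff (𝓡 n) 𝓘(ℝ) (⊤ : ℕ∞) f) :
    ContMDiff (𝓡 n) 𝓘(ℝ) (⊤ : ℕ∞) (VFDeriv n Y f) :=
  contMDiff_tangentBundle_snd.comp ((hf.contMDiff_tangentMap le_rfl).comp hY)

theorem vfDeriv_add_left (Y Y' : Π p : M, TangentSpace (𝓡 n) p) (f : M → ℝ) :
    VFDeriv n (Y + Y') f = VFDeriv n Y f + VFDeriv n Y' f :=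
  funext fun p => map_add (mfderiv (𝓡 n) 𝓘(ℝ) f p) (Y p) (Y' p)

theorem vfDeriv_smul_left (c : ℝ) (Y : Π p : M, TangentSpace (𝓡 n) p) (f : M → ℝ) :
    VFDeriv n (c • Y) f = c • VFDeriv n Y f :=
  funext fun p => map_smul (mfderiv (𝓡 n) 𝓘(ℝ) f p) c (Y p)

theorem vfDeriv_zero_left (f : M → ℝ) : VFDeriv n (0 : Π p : M, TangentSpace (𝓡 n) p) f = 0 :=
  funext fun p => map_zero (mfderiv (𝓡 n) 𝓘(ℝ) f p)

theorem vfDeriv_add_right (Z : Π p : M, TangentSpace (𝓡 n) p) {g h : M → ℝ} {p : M}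
    (hg : MDifferentiableAt (𝓡 n) 𝓘(ℝ) g p) (hh : MDifferentiableAt (𝓡 n) 𝓘(ℝ) h p) :
    VFDeriv n Z (g + h) p = VFDeriv n Z g p + VFDeriv n Z h p := by
  simp only [VFDeriv, mfderiv_add hg hh]
  rfl

theorem vfDeriv_const_smul_right (Z : Π p : M, TangentSpace (𝓡 n) p) (c : ℝ) {g : M → ℝ} {p : M}
    (hg : MDifferentiableAt (𝓡 n) 𝓘(ℝ) g p) :
    VFDeriv n Z (c • g) p = c * VFDeriv n Z g p := by
  simp only [VFDeriv, const_smul_mfderiv hg]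
  rfl

theorem vfDeriv_zero_right (Z : Π p : M, TangentSpace (𝓡 n) p) : VFDeriv n Z 0 = 0 :=
  funext fun p => by
    simp only [VFDeriv, Pi.zero_def, mfderiv_const]
    rfl

theorem SmoothVF.mdifferentiableAt_vfDeriv {Y : Π p : M, TangentSpace (𝓡 n) p}
    (hY : SmoothVF n Y) {f : M → ℝ} (hf : ContMDiff (𝓡 n) 𝓘(ℝ) (⊤ : ℕ∞) f) (p : M) :
    MDifferentiableAt (𝓡 n) 𝓘(ℝ) (VFDeriv n Y f) p :=
  (hY.contMDiff_vfDeriv hf p).mdifferentiableAt (by simp)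

theorem IsLieBracketOf.add {Y Y' Z W W' : Π p : M, TangentSpace (𝓡 n) p} (hY : SmoothVF n Y)
    (hY' : SmoothVF n Y') (h : IsLieBracketOf n Y Z W) (h' : IsLieBracketOf n Y' Z W') :
    IsLieBracketOf n (Y + Y') Z (W + W') := by
  intro f hf p
  rw [vfDeriv_add_left, vfDeriv_add_left, vfDeriv_add_left,
    vfDeriv_add_right _ (hY.mdifferentiableAt_vfDeriv hf p) (hY'.mdifferentiableAt_vfDeriv hf p)]
  simp only [Pi.add_apply]
  linarith [h f hf p, h' f hf p]

theorem IsLieBracketOf.const_smul {Y Z W : Π p : M, TangentSpace (𝓡 n) p} (c : ℝ)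
    (hY : SmoothVF n Y) (h : IsLieBracketOf n Y Z W) : IsLieBracketOf n (c • Y) Z (c • W) := by
  intro f hf p
  rw [vfDeriv_smul_left, vfDeriv_smul_left, vfDeriv_smul_left,
    vfDeriv_const_smul_right _ c (hY.mdifferentiableAt_vfDeriv hf p)]
  simp only [Pi.smul_apply, smul_eq_mul]
  rw [← h f hf p]
  ring

theorem isLieBracketOf_zero_left (Z : Π p : M, TangentSpace (𝓡 n) p) :
    IsLieBracketOf n 0 Z 0 := by
  intro f _ p
  simp [vfDeriv_zero_left, vfDeriv_zero_right]

variable {q₀ q : M}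

def chartRep (q₀ : M) (W : Π p : M, TangentSpace (𝓡 n) p) (x : EucSp n) : EucSp n :=
  mfderiv (𝓡 n) (𝓡 n) (chartAt (EucSp n) q₀) ((chartAt (EucSp n) q₀).symm x)
    (W ((chartAt (EucSp n) q₀).symm x))

omit [IsManifold (𝓡 n) (⊤ : ℕ∞) M] in
theorem chartRep_chartAt (hq : q ∈ (chartAt (EucSp n) q₀).source)
    (W : Π p : M, TangentSpace (𝓡 n) p) :
    chartRep q₀ W (chartAt (EucSp n) q₀ q) =
      mfderiv (𝓡 n) (𝓡 n) (chartAt (EucSp n) q₀) q (W q) := by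
  rw [chartRep, (chartAt (EucSp n) q₀).left_inv hq]

theorem chartRep_chartAt_eq_zero_iff (hq : q ∈ (chartAt (EucSp n) q₀).source)
    (W : Π p : M, TangentSpace (𝓡 n) p) :
    chartRep q₀ W (chartAt (EucSp n) q₀ q) = 0 ↔ W q = 0 := by
  rw [chartRep_chartAt hq]
  exact map_eq_zero_iff _ ((mdifferentiable_chart (I := 𝓡 n) q₀).mfderiv_injective hq)

omit [IsManifold (𝓡 n) (⊤ : ℕ∞) M] in
theorem chartRep_zero (q₀ : M) : chartRep q₀ (0 : Π p : M, TangentSpace (𝓡 n) p) = 0 :=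
  funext fun _ => map_zero _

theorem span_range_chartRep_chartAt (hq : q ∈ (chartAt (EucSp n) q₀).source) {ι : Type*}
    {X : ι → Π p : M, TangentSpace (𝓡 n) p}
    (hX : Submodule.span ℝ (range fun i => X i q) = ⊤) :
    Submodule.span ℝ (range fun i => chartRep q₀ (X i) (chartAt (EucSp n) q₀ q)) = ⊤ := by
  let e : TangentSpace (𝓡 n) q ≃L[ℝ] EucSp n := (mdifferentiable_chart (I := 𝓡 n) q₀).mfderiv hq
  have himage : (range fun i => chartRep q₀ (X i) (chartAt (EucSp n) q₀ q)) =
      e '' range fun i => X i q := by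
    rw [← range_comp]
    exact congrArg range (funext fun i => chartRep_chartAt hq (X i))
  have h := Submodule.span_image_linearEquiv (e : TangentSpace (𝓡 n) q ≃ₗ[ℝ] EucSp n)
    (s := range fun i => X i q)
  rw [hX, Submodule.map_top, LinearEquiv.range] at h
  rw [himage]
  exact h

theorem vfDeriv_congr (W : Π p : M, TangentSpace (𝓡 n) p) {f g : M → ℝ} (h : f =ᶠ[𝓝 q] g) :
    VFDeriv n W f q = VFDeriv n W g q := by
  simp only [VFDeriv]
  rw [h.mfderiv_eq]
  rfl

theorem vfDeriv_comp_chartAt (hq : q ∈ (chartAt (EucSp n) q₀).source) {g : EucSp n → ℝ}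
    (hg : DifferentiableAt ℝ g (chartAt (EucSp n) q₀ q)) (W : Π p : M, TangentSpace (𝓡 n) p) :
    VFDeriv n W (g ∘ chartAt (EucSp n) q₀) q =
      fderiv ℝ g (chartAt (EucSp n) q₀ q) (chartRep q₀ W (chartAt (EucSp n) q₀ q)) := by
  rw [chartRep_chartAt hq]
  have hc := ((mdifferentiable_chart (I := 𝓡 n) q₀).mdifferentiableAt hq).hasMFDerivAt
  exact congrArg (· (W q)) (hg.hasFDerivAt.hasMFDerivAt.comp q hc).mfderiv

-- Brackets are only tested against globally smooth functions, so the linear chart coordinate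
-- `ℓ ∘ chartAt q₀` is cut off by a bump function; near `q₀` nothing changes.
def bumpCoord (γ : SmoothBumpFunction (𝓡 n) q₀) (ℓ : EucSp n →L[ℝ] ℝ) : M → ℝ :=
  fun q => γ q • ℓ (chartAt (EucSp n) q₀ q)

theorem contMDiff_bumpCoord [T2Space M] (γ : SmoothBumpFunction (𝓡 n) q₀)
    (ℓ : EucSp n →L[ℝ] ℝ) : ContMDiff (𝓡 n) 𝓘(ℝ) (⊤ : ℕ∞) (bumpCoord γ ℓ) :=
  γ.contMDiff_smul (ℓ.contMDiff.comp_contMDiffOn contMDiffOn_chart)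

theorem eventually_vfDeriv_bumpCoord_eventuallyEq (γ : SmoothBumpFunction (𝓡 n) q₀) :
    ∀ᶠ q in 𝓝 q₀, q ∈ (chartAt (EucSp n) q₀).source ∧ ∀ W ℓ,
      VFDeriv n W (bumpCoord γ ℓ) =ᶠ[𝓝 q]
        fun q' => ℓ (chartRep q₀ W (chartAt (EucSp n) q₀ q')) := by
  have hsource := (chartAt (EucSp n) q₀).open_source.mem_nhds (mem_chart_source (EucSp n) q₀)
  filter_upwards [(γ.eventuallyEq_one.and hsource).eventually_nhds.eventually_nhds] with q hq
  refine ⟨hq.self_of_nhds.self_of_nhds.2, fun W ℓ => ?_⟩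
  filter_upwards [hq] with q' hq'
  have hloc : bumpCoord γ ℓ =ᶠ[𝓝 q'] ℓ ∘ chartAt (EucSp n) q₀ := by
    filter_upwards [hq'] with x hx
    simp [bumpCoord, hx.1]
  rw [vfDeriv_congr W hloc, vfDeriv_comp_chartAt hq'.self_of_nhds.2 ℓ.differentiableAt, ℓ.fderiv]

theorem eventually_contDiffAt_chartRep [T2Space M] {W : Π p : M, TangentSpace (𝓡 n) p}
    (hW : SmoothVF n W) :
    ∀ᶠ x in 𝓝 (chartAt (EucSp n) q₀ q₀), ContDiffAt ℝ 1 (chartRep q₀ W) x := by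
  -- near `q₀` the coordinates of `chartRep q₀ W` are `W`-derivatives of bump coordinates
  obtain ⟨γ⟩ : Nonempty (SmoothBumpFunction (𝓡 n) q₀) := inferInstance
  set c := chartAt (EucSp n) q₀
  have hbump := (c.eventually_nhds' _ (mem_chart_source (EucSp n) q₀)).mpr
    (eventually_vfDeriv_bumpCoord_eventuallyEq γ)
  filter_upwards [hbump, c.open_target.mem_nhds (mem_chart_target (EucSp n) q₀)]
    with x ⟨_, hx⟩ hxt
  rw [contDiffAt_euclidean]
  intro j
  have hsmooth : ContDiffAt ℝ 1
      (fun x' => VFDeriv n W (bumpCoord γ (EuclideanSpace.proj j)) (c.symm x')) x :=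
    (contMDiffAt_iff_contDiffAt.mp
      ((hW.contMDiff_vfDeriv (contMDiff_bumpCoord γ _)).contMDiffAt.comp x
        (contMDiffOn_chart_symm.contMDiffAt (c.open_target.mem_nhds hxt)))).of_le
      (by exact_mod_cast le_top)
  refine hsmooth.congr_of_eventuallyEq ?_
  filter_upwards [(c.continuousAt_symm hxt).eventually (hx W (EuclideanSpace.proj j)),
    c.eventually_right_inverse hxt] with x' h1 h2
  rw [h1, h2]
  rfl

theorem IsLieBracketOf.eventually_chartRep_eq [T2Space M] {Y Z W : Π p : M, TangentSpace (𝓡 n) p}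
    (hY : SmoothVF n Y) (hZ : SmoothVF n Z) (h : IsLieBracketOf n Y Z W) :
    ∀ᶠ x in 𝓝 (chartAt (EucSp n) q₀ q₀),
      fderiv ℝ (chartRep q₀ Z) x (chartRep q₀ Y x) - fderiv ℝ (chartRep q₀ Y) x (chartRep q₀ Z x)
        = chartRep q₀ W x := by
  obtain ⟨γ⟩ : Nonempty (SmoothBumpFunction (𝓡 n) q₀) := inferInstance
  set c := chartAt (EucSp n) q₀
  have hbump := (c.eventually_nhds' _ (mem_chart_source (EucSp n) q₀)).mpr
    (eventually_vfDeriv_bumpCoord_eventuallyEq γ)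
  filter_upwards [hbump, eventually_contDiffAt_chartRep hY, eventually_contDiffAt_chartRep hZ,
    c.eventually_right_inverse' (mem_chart_source (EucSp n) q₀)] with x ⟨hxs, hx⟩ hYx hZx hcx
  rw [SeparatingDual.eq_iff_forall_dual_eq (R := ℝ)]
  intro ℓ
  have hsecond : ∀ {U V : Π p : M, TangentSpace (𝓡 n) p}, ContDiffAt ℝ 1 (chartRep q₀ V) x →
      VFDeriv n U (VFDeriv n V (bumpCoord γ ℓ)) (c.symm x) =
        ℓ (fderiv ℝ (chartRep q₀ V) x (chartRep q₀ U x)) := by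
    intro U V hV
    have hd := (hV.differentiableAt one_ne_zero).hasFDerivAt
    rw [← hcx] at hd
    rw [vfDeriv_congr U (hx V ℓ)]
    have := vfDeriv_comp_chartAt hxs (ℓ.hasFDerivAt.comp _ hd).differentiableAt U
    rw [(ℓ.hasFDerivAt.comp _ hd).fderiv, hcx] at this
    exact this
  have key := h (bumpCoord γ ℓ) (contMDiff_bumpCoord γ ℓ) (c.symm x)
  rw [hsecond hZx, hsecond hYx, (hx W ℓ).self_of_nhds] at key
  rw [map_sub, key]
  exact congrArg (fun x => ℓ (chartRep q₀ W x)) hcx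

def symmetrySubmodule {ι : Type*} (X : ι → Π p : M, TangentSpace (𝓡 n) p) :
    Submodule ℝ (Π p : M, TangentSpace (𝓡 n) p) where
  carrier := {Y | SmoothVF n Y ∧ ∀ i, IsLieBracketOf n Y (X i) 0}
  add_mem' := fun ⟨hY, hYX⟩ ⟨hY', hY'X⟩ =>
    ⟨hY.add hY', fun i => by simpa using (hYX i).add hY hY' (hY'X i)⟩
  zero_mem' := ⟨smoothVF_zero, fun i => isLieBracketOf_zero_left (X i)⟩
  smul_mem' := fun c _ ⟨hY, hYX⟩ =>
    ⟨hY.const_smul c, fun i => by simpa using (hYX i).const_smul c hY⟩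

variable [T2Space M] {ι : Type*} [Fintype ι] {X : ι → Π p : M, TangentSpace (𝓡 n) p}

theorem eventually_eq_zero_iff_of_mem_symmetrySubmodule (hX : ∀ i, SmoothVF n (X i))
    (hspan : ∀ p, Submodule.span ℝ (range fun i => X i p) = ⊤)
    {Y : Π p : M, TangentSpace (𝓡 n) p} (hY : Y ∈ symmetrySubmodule X) (q₀ : M) :
    ∀ᶠ q in 𝓝 q₀, (Y q = 0 ↔ Y q₀ = 0) := by
  set c := chartAt (EucSp n) q₀
  have hy : ∀ᶠ x in 𝓝 (c q₀), (chartRep q₀ Y x = 0 ↔ chartRep q₀ Y (c q₀) = 0) := by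
    by_cases h0 : chartRep q₀ Y (c q₀) = 0
    · have hcomm : ∀ᶠ x in 𝓝 (c q₀), ∀ i, fderiv ℝ (chartRep q₀ Y) x (chartRep q₀ (X i) x) =
          fderiv ℝ (chartRep q₀ (X i)) x (chartRep q₀ Y x) := by
        filter_upwards [eventually_all.2 fun i =>
          (hY.2 i).eventually_chartRep_eq (q₀ := q₀) hY.1 (hX i)] with x hx i
        have hxi := hx i
        rw [chartRep_zero, Pi.zero_apply, sub_eq_zero] at hxi
        exact hxi.symm
      filter_upwards [eventuallyEq_zero_of_fderiv_comm
        (fun i => (eventually_contDiffAt_chartRep (hX i)).self_of_nhds)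
        ((eventually_contDiffAt_chartRep hY.1).mono fun x hx => hx.differentiableAt one_ne_zero)
        hcomm (span_range_chartRep_chartAt (mem_chart_source (EucSp n) q₀) (hspan q₀)) h0]
        with x hx
      simp [hx, h0]
    · filter_upwards
        [(eventually_contDiffAt_chartRep hY.1).self_of_nhds.continuousAt.eventually_ne h0] with x hx
      simp [hx, h0]
  filter_upwards [(c.continuousAt (mem_chart_source (EucSp n) q₀)).eventually hy,
    c.open_source.mem_nhds (mem_chart_source (EucSp n) q₀)] with q hq hqs
  rwa [chartRep_chartAt_eq_zero_iff hqs, chartRep_chartAt_eq_zero_iff (mem_chart_source _ q₀)] at hq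

theorem eq_zero_of_mem_symmetrySubmodule [PreconnectedSpace M] (hX : ∀ i, SmoothVF n (X i))
    (hspan : ∀ p, Submodule.span ℝ (range fun i => X i p) = ⊤)
    {Y : Π p : M, TangentSpace (𝓡 n) p} (hY : Y ∈ symmetrySubmodule X) {p : M} (hp : Y p = 0) :
    Y = 0 := by
  have hloc : IsLocallyConstant fun q => Y q = 0 :=
    (IsLocallyConstant.iff_eventually_eq _).2 fun q =>
      (eventually_eq_zero_iff_of_mem_symmetrySubmodule hX hspan hY q).mono fun _ h => propext h
  funext q
  exact (eq_iff_iff.mp (hloc.apply_eq_of_preconnectedSpace q p)).mpr hp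

theorem eq_of_mem_symmetrySubmodule_of_apply_eq [PreconnectedSpace M] (hX : ∀ i, SmoothVF n (X i))
    (hspan : ∀ p, Submodule.span ℝ (range fun i => X i p) = ⊤) {p : M}
    {Y Z : Π p : M, TangentSpace (𝓡 n) p} (hY : Y ∈ symmetrySubmodule X)
    (hZ : Z ∈ symmetrySubmodule X) (h : Y p = Z p) : Y = Z :=
  sub_eq_zero.mp <| eq_zero_of_mem_symmetrySubmodule hX hspan (sub_mem hY hZ) (p := p) <| by
    rw [Pi.sub_apply, h, sub_self]

end VectorFields

/-- the infinitesimal symmetries of a coframe on a connected manifold form a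
real vector subspace of the space of vector fields, on which evaluation at any point is
injective; in particular this space is finite-dimensional of dimension at most `n`. -/
theorem symmetry_algebra_finite_dimensional
    (n : ℕ) {M : Type*} [TopologicalSpace M] [ChartedSpace (EucSp n) M]
    [IsManifold (𝓡 n) (⊤ : ℕ∞) M] [T2Space M] [ConnectedSpace M]
    (X : Fin n → ∀ p : M, TangentSpace (𝓡 n) p) (hX : IsFrame n X) :
    ∃ g : Submodule ℝ (∀ p : M, TangentSpace (𝓡 n) p),
      ((g : Set (∀ p : M, TangentSpace (𝓡 n) p)) =
        {Y | SmoothVF n Y ∧ ∀ i, IsLieBracketOf n Y (X i) (fun p => (0 : TangentSpace (𝓡 n) p))}) ∧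
      (∀ p : M, ∀ Y ∈ g, ∀ Z ∈ g, Y p = Z p → Y = Z) ∧
      FiniteDimensional ℝ g ∧ Module.finrank ℝ g ≤ n := by
  have heq : ∀ p : M, ∀ Y ∈ symmetrySubmodule X, ∀ Z ∈ symmetrySubmodule X, Y p = Z p → Y = Z :=
    fun _ _ hY _ hZ => eq_of_mem_symmetrySubmodule_of_apply_eq hX.smooth hX.span hY hZ
  obtain ⟨p₀⟩ := ConnectedSpace.toNonempty (α := M)
  let eval : symmetrySubmodule X →ₗ[ℝ] TangentSpace (𝓡 n) p₀ :=
    (LinearMap.proj p₀).comp (symmetrySubmodule X).subtype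
  have heval : Function.Injective eval := fun Y Z h => Subtype.ext (heq p₀ Y Y.2 Z Z.2 h)
  have : FiniteDimensional ℝ (TangentSpace (𝓡 n) p₀) :=
    inferInstanceAs (FiniteDimensional ℝ (EucSp n))
  exact ⟨symmetrySubmodule X, rfl, heq, .of_injective eval heval,
    (LinearMap.finrank_le_finrank_of_injective heval).trans_eq finrank_euclideanSpace_fin⟩
end
end

section
/- Let M be a connected smooth n-manifold, θ a coframe on M, and φ : M → M a diffeomorphism with φ*θ^i = θ^i for all i. If φ has a fixed point, then φ is the identity map of M. -/
/-!
Common definitions: coframes (via their dual frames), Lie brackets of vector fields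
(characterized by their action on smooth functions), invariant functions, ranks,
Cartan realization data and realizations.
-/

open Manifold Set Filter
open scoped Topology

noncomputable section

/-!
The fixed-point set of `φ` is closed, so by connectedness it suffices to show that it is open.
Near a fixed point `q`, write `φ` in the chart at `q` as `Φ` and the frame as a matrix-valued map
`Z`, invertible near `q`; preservation of the frame reads `DΦ(y) ∘ Z(y) = Z(Φ y)`. For `x` near
`q`, the segment `ℓ` from `q` to `x` has velocity `Z(ℓ t) (c t)` with `c t = Z(ℓ t)⁻¹ (x - q)`,
and then `Φ ∘ ℓ` solves the same ODE `y' = Z(y) (c t)`, which is Lipschitz in `y`, with the same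
initial value `q`. By uniqueness of solutions, `Φ x = x`.
-/

open scoped NNReal

theorem eventually_isUnit_and_nnnorm_inverse_lt {R α : Type*} [NormedRing R]
    [HasSummableGeomSeries R] [TopologicalSpace α] {Z : α → R} {x₀ : α}
    (hZ : ContinuousAt Z x₀) (hZx₀ : IsUnit (Z x₀)) :
    ∀ᶠ y in 𝓝 x₀, IsUnit (Z y) ∧ ‖Ring.inverse (Z y)‖₊ < ‖Ring.inverse (Z x₀)‖₊ + 1 := by
  have hinv : ContinuousAt (fun y => Ring.inverse (Z y)) x₀ :=
    (hZx₀.unit_spec ▸ NormedRing.inverse_continuousAt hZx₀.unit).comp hZ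
  exact (hZ.eventually (Units.isOpen.mem_nhds hZx₀)).and
    (hinv.nnnorm.eventually (gt_mem_nhds (lt_add_one _)))

section Euclidean

variable {E : Type*} [NormedAddCommGroup E] [NormedSpace ℝ E]

theorem LipschitzOnWith.clm_apply_const {Z : E → E →L[ℝ] E} {Ω : Set E} {K : ℝ≥0}
    (hZ : LipschitzOnWith K Z Ω) (u : E) :
    LipschitzOnWith (K * ‖u‖₊) (fun y => Z y u) Ω := by
  refine LipschitzOnWith.of_dist_le_mul fun y hy y' hy' => ?_
  calc dist (Z y u) (Z y' u) = ‖(Z y - Z y') u‖ := by rw [dist_eq_norm, sub_apply]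
    _ ≤ ‖Z y - Z y'‖ * ‖u‖ := (Z y - Z y').le_opNorm u
    _ ≤ K * dist y y' * ‖u‖ := by
        gcongr; rw [← dist_eq_norm]; exact hZ.dist_le_mul y hy y' hy'
    _ = ↑(K * ‖u‖₊) * dist y y' := by push_cast; ring

theorem eqOn_id_of_hasFDerivAt_mul_eq {Z R : E → E →L[ℝ] E} {Φ : E → E} {s Ω : Set E}
    {x₀ : E} {K C : ℝ≥0} (hs : Convex ℝ s) (hx₀ : x₀ ∈ s) (hΦx₀ : Φ x₀ = x₀) (hsΩ : s ⊆ Ω)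
    (hΦs : MapsTo Φ s Ω) (hZ : LipschitzOnWith K Z Ω) (hR : ∀ y ∈ s, Z y * R y = 1)
    (hRC : ∀ y ∈ s, ‖R y‖₊ ≤ C)
    (hΦ : ∀ y ∈ s, ∃ D : E →L[ℝ] E, HasFDerivAt Φ D y ∧ D * Z y = Z (Φ y)) :
    EqOn Φ id s := by
  intro x hx
  set w := x - x₀
  set ℓ : ℝ → E := fun t => AffineMap.lineMap x₀ x t
  have hℓs : ∀ t ∈ Icc (0 : ℝ) 1, ℓ t ∈ s := fun t ht => hs.lineMap_mem hx₀ hx ht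
  set c : ℝ → E := fun t => R (ℓ t) w
  have hc : ∀ t ∈ Icc (0 : ℝ) 1, Z (ℓ t) (c t) = w := fun t ht => by
    rw [← mul_apply_eq_comp, hR _ (hℓs t ht), one_apply_eq_self]
  have hℓ' : ∀ t ∈ Icc (0 : ℝ) 1, HasDerivAt ℓ (Z (ℓ t) (c t)) t := fun t ht => by
    rw [hc t ht]; exact AffineMap.hasDerivAt_lineMap
  have hΦℓ' : ∀ t ∈ Icc (0 : ℝ) 1, HasDerivAt (Φ ∘ ℓ) (Z (Φ (ℓ t)) (c t)) t := fun t ht => by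
    obtain ⟨D, hD, hDZ⟩ := hΦ (ℓ t) (hℓs t ht)
    have := hD.comp_hasDerivAt t (hℓ' t ht)
    rwa [← mul_apply_eq_comp, hDZ] at this
  have hlip : ∀ t ∈ Ico (0 : ℝ) 1,
      LipschitzOnWith (K * (C * ‖w‖₊)) (fun y => Z y (c t)) Ω := fun t ht =>
    (hZ.clm_apply_const (c t)).weaken <| by
      gcongr
      calc ‖c t‖₊ ≤ ‖R (ℓ t)‖₊ * ‖w‖₊ := (R (ℓ t)).le_opNNNorm w
        _ ≤ C * ‖w‖₊ := by gcongr; exact hRC _ (hℓs t (Ico_subset_Icc_self ht))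
  have hsol := ODE_solution_unique_of_mem_Icc_right hlip
    (fun t ht => (hΦℓ' t ht).continuousAt.continuousWithinAt)
    (fun t ht => (hΦℓ' t (Ico_subset_Icc_self ht)).hasDerivWithinAt)
    (fun t ht => hΦs (hℓs t (Ico_subset_Icc_self ht)))
    (fun t ht => (hℓ' t ht).continuousAt.continuousWithinAt)
    (fun t ht => (hℓ' t (Ico_subset_Icc_self ht)).hasDerivWithinAt)
    (fun t ht => hsΩ (hℓs t (Ico_subset_Icc_self ht)))
    (by simp [ℓ, hΦx₀])
  simpa [ℓ] using hsol (right_mem_Icc.2 zero_le_one)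

theorem eventuallyEq_id_of_hasFDerivAt_mul_eq [CompleteSpace E] {Z : E → E →L[ℝ] E}
    {Φ : E → E} {x₀ : E} {K : ℝ≥0} {Ω : Set E} (hΩ : Ω ∈ 𝓝 x₀) (hZ : LipschitzOnWith K Z Ω)
    (hZx₀ : IsUnit (Z x₀)) (hΦ : ContinuousAt Φ x₀) (hΦx₀ : Φ x₀ = x₀)
    (hΦZ : ∀ᶠ y in 𝓝 x₀, ∃ D : E →L[ℝ] E, HasFDerivAt Φ D y ∧ D * Z y = Z (Φ y)) :
    Φ =ᶠ[𝓝 x₀] id := by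
  have hΦΩ : ∀ᶠ y in 𝓝 x₀, Φ y ∈ Ω := hΦ.preimage_mem_nhds (by rwa [hΦx₀])
  obtain ⟨r, hr, hball⟩ := Metric.eventually_nhds_iff_ball.1 <|
    (eventually_isUnit_and_nnnorm_inverse_lt (hZ.continuousOn.continuousAt hΩ) hZx₀).and
      (hΦZ.and (hΦΩ.and hΩ))
  refine eventuallyEq_of_mem (Metric.ball_mem_nhds x₀ hr) ?_
  refine eqOn_id_of_hasFDerivAt_mul_eq (R := fun y => Ring.inverse (Z y)) (convex_ball x₀ r)
    (Metric.mem_ball_self hr) hΦx₀ (fun y hy => (hball y hy).2.2.2)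
    (fun y hy => (hball y hy).2.2.1) hZ
    (fun y hy => Ring.mul_inverse_cancel _ (hball y hy).1.1)
    (fun y hy => (hball y hy).1.2.le) (fun y hy => (hball y hy).2.1)

end Euclidean

section ChartExpression

variable {E : Type*} [NormedAddCommGroup E] [NormedSpace ℝ E] {H : Type*} [TopologicalSpace H]
  {I : ModelWithCorners ℝ E H} {M : Type*} [TopologicalSpace M] [ChartedSpace H M]

theorem eventuallyEq_id_of_extChartAt_comp_eventuallyEq_id {φ : M → M} {q : M}
    (hφ : ContinuousAt φ q) (hq : φ q = q)
    (h : extChartAt I q ∘ φ ∘ (extChartAt I q).symm =ᶠ[𝓝 (extChartAt I q q)] id) :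
    φ =ᶠ[𝓝 q] id := by
  filter_upwards [extChartAt_source_mem_nhds (I := I) q,
    hφ.preimage_mem_nhds (by rw [hq]; exact extChartAt_source_mem_nhds (I := I) q),
    (continuousAt_extChartAt q).preimage_mem_nhds h] with m hm hφm hm'
  refine (extChartAt I q).injOn hφm hm ?_
  have : extChartAt I q (φ ((extChartAt I q).symm (extChartAt I q m))) = extChartAt I q m := hm'
  rwa [(extChartAt I q).left_inv hm] at this

variable [I.Boundaryless] [IsManifold I 1 M]
  {E' : Type*} [NormedAddCommGroup E'] [NormedSpace ℝ E'] {H' : Type*} [TopologicalSpace H']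
  {I' : ModelWithCorners ℝ E' H'} [I'.Boundaryless] {M' : Type*} [TopologicalSpace M']
  [ChartedSpace H' M'] [IsManifold I' 1 M']

theorem hasFDerivAt_extChartAt_comp_extChartAt_symm {φ : M → M'} {q p : M} {q' : M'}
    (hp : p ∈ (extChartAt I q).source) (hφp : φ p ∈ (extChartAt I' q').source)
    (hφ : MDifferentiableAt I I' φ p) :
    HasFDerivAt (extChartAt I' q' ∘ φ ∘ (extChartAt I q).symm)
      (tangentCoordChange I' (φ p) q' (φ p) ∘L mfderiv I I' φ p ∘L tangentCoordChange I q p p)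
      (extChartAt I q p) := by
  have hy : (extChartAt I q).symm (extChartAt I q p) = p := (extChartAt I q).left_inv hp
  have hin : HasFDerivAt (extChartAt I p ∘ (extChartAt I q).symm)
      (tangentCoordChange I q p p) (extChartAt I q p) := by
    simpa only [I.range_eq_univ, hasFDerivWithinAt_univ] using
      hasFDerivWithinAt_tangentCoordChange (I := I) ⟨hp, mem_extChartAt_source p⟩
  have hmid : HasFDerivAt (writtenInExtChartAt I I' p φ) (mfderiv I I' φ p)
      ((extChartAt I p ∘ (extChartAt I q).symm) (extChartAt I q p)) := by
    have := hφ.hasMFDerivAt.2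
    rw [I.range_eq_univ] at this
    simpa only [Function.comp_apply, hy] using hasFDerivWithinAt_univ.mp this
  have hout : HasFDerivAt (extChartAt I' q' ∘ (extChartAt I' (φ p)).symm)
      (tangentCoordChange I' (φ p) q' (φ p))
      (writtenInExtChartAt I I' p φ
        ((extChartAt I p ∘ (extChartAt I q).symm) (extChartAt I q p))) := by
    have := hasFDerivWithinAt_tangentCoordChange (I := I') ⟨mem_extChartAt_source (φ p), hφp⟩
    rw [I'.range_eq_univ, hasFDerivWithinAt_univ] at this
    have hW : writtenInExtChartAt I I' p φ (extChartAt I p p) = extChartAt I' (φ p) (φ p) := by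
      simp [writtenInExtChartAt]
    rwa [Function.comp_apply, hy, hW]
  refine ((hout.comp _ hmid).comp _ hin).congr_of_eventuallyEq ?_
  have hnhds : (extChartAt I q).target ∩ (extChartAt I q).symm ⁻¹'
      ((extChartAt I p).source ∩ φ ⁻¹' (extChartAt I' (φ p)).source) ∈
        𝓝 (extChartAt I q p) := by
    refine inter_mem ((isOpen_extChartAt_target q).mem_nhds ((extChartAt I q).map_source hp))
      ((continuousAt_extChartAt_symm'' ((extChartAt I q).map_source hp)).preimage_mem_nhds ?_)
    rw [hy]
    exact inter_mem (extChartAt_source_mem_nhds p)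
      (hφ.continuousAt.preimage_mem_nhds (extChartAt_source_mem_nhds (φ p)))
  filter_upwards [hnhds] with z hz
  obtain ⟨-, hz, hφz⟩ := hz
  simp only [Function.comp_apply, writtenInExtChartAt, (extChartAt I p).left_inv hz,
    (extChartAt I' (φ p)).left_inv hφz]

end ChartExpression

section Frame

variable {n : ℕ} {M : Type*} [TopologicalSpace M] [ChartedSpace (EucSp n) M]
  [IsManifold (𝓡 n) (⊤ : ℕ∞) M]

/-- Column `i` of `frameInChart X q y` is `X i` at the point with coordinates `y` in the chart at
`q`, expressed in that chart. -/
def frameInChart (X : Fin n → ∀ p : M, TangentSpace (𝓡 n) p) (q : M) (y : EucSp n) :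
    EucSp n →L[ℝ] EucSp n :=
  ∑ i, (EuclideanSpace.proj i).smulRight
    (tangentCoordChange (𝓡 n) ((extChartAt (𝓡 n) q).symm y) q ((extChartAt (𝓡 n) q).symm y)
      (X i ((extChartAt (𝓡 n) q).symm y)))

theorem frameInChart_extChartAt_apply (X : Fin n → ∀ p : M, TangentSpace (𝓡 n) p) {q p : M}
    (hp : p ∈ (extChartAt (𝓡 n) q).source) (w : EucSp n) :
    frameInChart X q (extChartAt (𝓡 n) q p) w =
      ∑ i, w i • tangentCoordChange (𝓡 n) p q p (X i p) := by
  rw [frameInChart]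
  generalize hp' : (extChartAt (𝓡 n) q).symm (extChartAt (𝓡 n) q p) = p'
  obtain rfl : p' = p := hp'.symm.trans ((extChartAt (𝓡 n) q).left_inv hp)
  simp only [sum_apply, ContinuousLinearMap.smulRight_apply]
  rfl

theorem contDiffAt_frameInChart {X : Fin n → ∀ p : M, TangentSpace (𝓡 n) p}
    (hX : ∀ i, SmoothVF n (X i)) (q : M) :
    ContDiffAt ℝ (⊤ : ℕ∞) (frameInChart X q) (extChartAt (𝓡 n) q q) := by
  refine ContDiffAt.sum fun i _ => ?_
  have hXi := ((contMDiffAt_iff.1 (hX i q)).2.contDiffAt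
    (range_mem_nhds_isInteriorPoint BoundarylessManifold.isInteriorPoint)).snd
  exact (ContinuousLinearMap.smulRightL ℝ (EucSp n) (EucSp n)
    (EuclideanSpace.proj i)).contDiff.contDiffAt.comp _ hXi

theorem isUnit_frameInChart_extChartAt_self {X : Fin n → ∀ p : M, TangentSpace (𝓡 n) p}
    (hX : ∀ p, LinearIndependent ℝ fun i => X i p) (q : M) :
    IsUnit (frameInChart X q (extChartAt (𝓡 n) q q)) := by
  have hinj : Function.Injective (frameInChart X q (extChartAt (𝓡 n) q q)) := by
    rw [injective_iff_map_eq_zero]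
    intro w hw
    have hself : ∀ i, tangentCoordChange (𝓡 n) q q q (X i q) = X i q := fun i =>
      tangentCoordChange_self (mem_extChartAt_source q)
    simp only [frameInChart_extChartAt_apply X (mem_extChartAt_source q), hself] at hw
    ext i
    exact Fintype.linearIndependent_iff.1 (hX q) (fun i => w i) hw i
  exact ContinuousLinearMap.isUnit_iff_bijective.2 ⟨hinj, (LinearMap.injective_iff_surjective
    (f := (frameInChart X q (extChartAt (𝓡 n) q q) : EucSp n →ₗ[ℝ] EucSp n))).1 hinj⟩

theorem hasFDerivAt_mul_frameInChart_eq {X : Fin n → ∀ p : M, TangentSpace (𝓡 n) p}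
    {φ : M → M} (hφ : MDifferentiable (𝓡 n) (𝓡 n) φ)
    (hφX : ∀ i p, mfderiv (𝓡 n) (𝓡 n) φ p (X i p) = X i (φ p)) {q p : M}
    (hp : p ∈ (extChartAt (𝓡 n) q).source) (hφp : φ p ∈ (extChartAt (𝓡 n) q).source) :
    ∃ D : EucSp n →L[ℝ] EucSp n,
      HasFDerivAt (extChartAt (𝓡 n) q ∘ φ ∘ (extChartAt (𝓡 n) q).symm) D
        (extChartAt (𝓡 n) q p) ∧
      D * frameInChart X q (extChartAt (𝓡 n) q p)
        = frameInChart X q ((extChartAt (𝓡 n) q ∘ φ ∘ (extChartAt (𝓡 n) q).symm)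
            (extChartAt (𝓡 n) q p)) := by
  refine ⟨_, hasFDerivAt_extChartAt_comp_extChartAt_symm hp hφp (hφ p), ?_⟩
  have hround : ∀ v, tangentCoordChange (𝓡 n) q p p (tangentCoordChange (𝓡 n) p q p v) = v :=
    fun v => by
      rw [tangentCoordChange_comp ⟨⟨mem_extChartAt_source p, hp⟩, mem_extChartAt_source p⟩,
        tangentCoordChange_self (mem_extChartAt_source p)]
  ext1 w
  simp only [Function.comp_apply, (extChartAt (𝓡 n) q).left_inv hp, mul_apply_eq_comp,
    frameInChart_extChartAt_apply X hp, frameInChart_extChartAt_apply X hφp,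
    map_sum, map_smul]
  refine Finset.sum_congr rfl fun i _ => ?_
  change _ • tangentCoordChange (𝓡 n) (φ p) q (φ p) (mfderiv (𝓡 n) (𝓡 n) φ p
    (tangentCoordChange (𝓡 n) q p p (tangentCoordChange (𝓡 n) p q p (X i p)))) = _
  exact congrArg (fun v => _ • tangentCoordChange (𝓡 n) (φ p) q (φ p) v)
    ((congrArg (mfderiv (𝓡 n) (𝓡 n) φ p) (hround _)).trans (hφX i p))

theorem eventuallyEq_id_of_mfderiv_apply_frame {X : Fin n → ∀ p : M, TangentSpace (𝓡 n) p}
    (hX : IsFrame n X) {φ : M → M} (hφ : MDifferentiable (𝓡 n) (𝓡 n) φ)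
    (hφX : ∀ i p, mfderiv (𝓡 n) (𝓡 n) φ p (X i p) = X i (φ p)) {q : M} (hq : φ q = q) :
    φ =ᶠ[𝓝 q] id := by
  set e := extChartAt (𝓡 n) q
  have hq' : e.symm (e q) = q := extChartAt_to_inv q
  have hcont : ContinuousAt (φ ∘ e.symm) (e q) :=
    (hφ (e.symm (e q))).continuousAt.comp (continuousAt_extChartAt_symm q)
  have hΦ : ContinuousAt (e ∘ φ ∘ e.symm) (e q) :=
    (continuousAt_extChartAt q).comp_of_eq hcont (by simp [hq', hq])
  have hΦq : (e ∘ φ ∘ e.symm) (e q) = e q := by simp [hq', hq]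
  have hchart : ∀ᶠ y in 𝓝 (e q), y ∈ e.target ∧ φ (e.symm y) ∈ e.source :=
    inter_mem (extChartAt_target_mem_nhds q)
      (hcont.preimage_mem_nhds <| by
        rw [Function.comp_apply, hq', hq]; exact extChartAt_source_mem_nhds q)
  obtain ⟨K, Ω, hΩ, hK⟩ :=
    ((contDiffAt_frameInChart hX.smooth q).of_le (m := 1) (by simp)).exists_lipschitzOnWith
  refine eventuallyEq_id_of_extChartAt_comp_eventuallyEq_id (hφ q).continuousAt hq <|
    eventuallyEq_id_of_hasFDerivAt_mul_eq hΩ hK (isUnit_frameInChart_extChartAt_self hX.indep q)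
    hΦ hΦq <| hchart.mono fun y ⟨hy, hφy⟩ => by
      rw [← e.right_inv hy]
      exact hasFDerivAt_mul_frameInChart_eq hφ hφX (e.map_target hy) hφy

end Frame

/-- a symmetry of a coframe on a connected manifold (a global self-equivalence)
with a fixed point is the identity. -/
theorem symmetry_with_fixed_point_is_id
    (n : ℕ) {M : Type*} [TopologicalSpace M] [ChartedSpace (EucSp n) M]
    [IsManifold (𝓡 n) (⊤ : ℕ∞) M] [T2Space M] [ConnectedSpace M]
    (X : Fin n → ∀ p : M, TangentSpace (𝓡 n) p) (hX : IsFrame n X)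
    (φ : M → M) (hφ : IsEquivOn n X X Set.univ Set.univ φ)
    (p : M) (hp : φ p = p) :
    φ = id := by
  obtain ⟨-, -, -, hsmooth, -, hφX⟩ := hφ
  have hdiff : MDifferentiable (𝓡 n) (𝓡 n) φ :=
    (contMDiffOn_univ.1 hsmooth).mdifferentiable (by simp)
  have hfix : IsClopen {m | φ m = m} :=
    ⟨isClosed_eq hdiff.continuous continuous_id, isOpen_iff_mem_nhds.2 fun q hq =>
      eventuallyEq_id_of_mfderiv_apply_frame hX hdiff (fun i m => hφX i m (mem_univ m)) hq⟩
  funext m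
  exact eq_univ_iff_forall.1 (hfix.eq_univ ⟨p, hp⟩) m
end
end

section
/- For every κ₀ ∈ ℝ and every smooth function H : ℝ → ℝ there exist ε > 0 and a smooth function h : (−ε, ε) → ℝ with h(u) > 0 for all u ∈ (−ε, ε), such that the function κ(u) := −h''(u)/h(u) satisfies κ(0) = κ₀ and κ'(u) = H(κ(u)) for all u ∈ (−ε, ε). -/
open Set Filter Finset
open scoped Topology NNReal ENNReal ContDiff

noncomputable section

namespace SurfRev

/-- Coefficients of the power series solution of `h'' = -(κ h)`. -/
def aa (c : ℕ → ℝ) : ℕ → ℝ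
  | 0 => 1
  | 1 => 0
  | (n + 2) =>
      -(∑ j ∈ Finset.range (n + 1), c j * aa c (n - j)) / (((n : ℝ) + 1) * ((n : ℝ) + 2))
termination_by n => n
decreasing_by omega

end SurfRev

open SurfRev in
/-- for every `κ₀ ∈ ℝ` and every smooth `H : ℝ → ℝ` there are `ε > 0` and a
smooth positive profile function `h` on `(-ε, ε)` whose Gaussian curvature
`κ(u) = -h''(u)/h(u)` satisfies `κ 0 = κ₀` and the law `κ' = H ∘ κ` on `(-ε, ε)`. -/
theorem exists_surface_of_revolution_with_prescribed_curvature_law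
    (κ₀ : ℝ) (H : ℝ → ℝ) (hH : ContDiff ℝ (⊤ : ℕ∞) H) :
    ∃ ε > (0 : ℝ), ∃ h : ℝ → ℝ,
      ContDiffOn ℝ (⊤ : ℕ∞) h (Set.Ioo (-ε) ε) ∧
      (∀ u ∈ Set.Ioo (-ε) ε, 0 < h u) ∧
      (-(deriv (deriv h) 0) / h 0 = κ₀) ∧
      (∀ u ∈ Set.Ioo (-ε) ε,
        deriv (fun v => -(deriv (deriv h) v) / h v) u = H (-(deriv (deriv h) u) / h u)) := by
  set F : ℝ × ℝ × ℝ → ℝ × ℝ × ℝ := fun Y => (H Y.1, Y.2.2, -(Y.1 * Y.2.1)) with hFdef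
  have hF : ContDiff ℝ (⊤ : ℕ∞) F :=
    (hH.comp contDiff_fst).prodMk
      (contDiff_snd.snd.prodMk (contDiff_fst.mul contDiff_snd.fst).neg)
  obtain ⟨ε, hε, a, r, L, K, hr, hPL⟩ :=
    IsPicardLindelof.of_contDiffAt_one (f := F) (x₀ := ((κ₀, 1, 0) : ℝ × ℝ × ℝ))
      (hF.contDiffAt.of_le (by exact_mod_cast le_top))
  obtain ⟨α, hα0, hα⟩ := IsPicardLindelof.exists_eq_forall_mem_Icc_hasDerivWithinAt (hPL 0)
    (Metric.mem_closedBall_self (NNReal.coe_nonneg r))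
  have hα0' : α 0 = (κ₀, 1, 0) := hα0
  have hsm : ContDiffOn ℝ (⊤ : ℕ∞) α (Icc (0 - ε) (0 + ε)) :=
    ODE.contDiffOn_enat_Icc_of_hasDerivWithinAt (f := fun _ => F) (u := univ)
      (hF.comp contDiff_snd).contDiffOn
      hα (mapsTo_univ _ _)
  have hIoo : ∀ t ∈ Ioo (-ε) ε, Icc (0 - ε) (0 + ε) ∈ 𝓝 t := fun t ht =>
    Icc_mem_nhds (by linarith [ht.1]) (by linarith [ht.2])
  have hd : ∀ t ∈ Ioo (-ε) ε, HasDerivAt α (F (α t)) t := fun t ht =>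
    (hα t (Ioo_subset_Icc_self (by simpa using ht))).hasDerivAt (hIoo t ht)
  have hd1 : ∀ t ∈ Ioo (-ε) ε, HasDerivAt (fun u => (α u).1) (H (α t).1) t := fun t ht =>
    (hd t ht).fst
  have hd2 : ∀ t ∈ Ioo (-ε) ε, HasDerivAt (fun u => (α u).2.1) (α t).2.2 t := fun t ht =>
    (hd t ht).snd.fst
  have hd3 : ∀ t ∈ Ioo (-ε) ε, HasDerivAt (fun u => (α u).2.2) (-((α t).1 * (α t).2.1)) t :=
    fun t ht => (hd t ht).snd.snd
  have hdd : ∀ t ∈ Ioo (-ε) ε,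
      deriv (deriv (fun u => (α u).2.1)) t = -((α t).1 * (α t).2.1) := by
    intro t ht
    have hev : deriv (fun u => (α u).2.1) =ᶠ[𝓝 t] fun u => (α u).2.2 := by
      filter_upwards [isOpen_Ioo.mem_nhds ht] with v hv
      exact (hd2 v hv).deriv
    rw [hev.deriv_eq]
    exact (hd3 t ht).deriv
  have h01 : (α 0).2.1 = 1 := by rw [hα0']
  have h0mem : (0 : ℝ) ∈ Ioo (-ε) ε := ⟨by linarith, hε⟩
  have hpos : ∀ᶠ u in 𝓝 0, 0 < (α u).2.1 :=
    (hd2 0 h0mem).continuousAt.eventually (eventually_gt_nhds (by show (0:ℝ) < (α 0).2.1; rw [h01]; norm_num))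
  obtain ⟨ε1, hε1, hP⟩ := Metric.eventually_nhds_iff.1 hpos
  set ε' := min ε ε1 with hε'
  have hε'ε : ε' ≤ ε := min_le_left _ _
  have hε'ε1 : ε' ≤ ε1 := min_le_right _ _
  have hsub : Ioo (-ε') ε' ⊆ Ioo (-ε) ε := fun x hx =>
    ⟨by linarith [hx.1], by linarith [hx.2]⟩
  have hpos' : ∀ u ∈ Ioo (-ε') ε', 0 < (α u).2.1 := fun u hu => hP (by
    rw [Real.dist_eq, sub_zero, abs_lt]
    constructor <;> linarith [hu.1, hu.2])
  have hcurv : ∀ u ∈ Ioo (-ε') ε',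
      -(deriv (deriv (fun u => (α u).2.1)) u) / (α u).2.1 = (α u).1 := by
    intro u hu
    rw [hdd u (hsub hu), neg_neg]
    exact mul_div_cancel_right₀ _ (hpos' u hu).ne'
  refine ⟨ε', lt_min hε hε1, fun u => (α u).2.1, ?_, hpos', ?_, ?_⟩
  · exact ((contDiff_fst.comp contDiff_snd).comp_contDiffOn hsm).mono
      (hsub.trans fun x hx => ⟨by linarith [hx.1], by linarith [hx.2]⟩)
  · beta_reduce
    rw [hcurv 0 ⟨by linarith [lt_min hε hε1], lt_min hε hε1⟩, hα0']
  · intro u hu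
    have hev : (fun v => -(deriv (deriv fun u => (α u).2.1) v) / (α v).2.1) =ᶠ[𝓝 u]
        fun v => (α v).1 := by
      filter_upwards [isOpen_Ioo.mem_nhds hu] with v hv
      exact hcurv v hv
    beta_reduce
    rw [hev.deriv_eq, (hd1 u (hsub hu)).deriv, hcurv u hu]
end
end
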